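/- arXiv:2508.20081 — 2 statements merged into one kernel-verified Lean document; each statement's English description precedes it below -/
import Mathlib

section
/- Let m, l, k ∈ ℝ with l ≤ m + k. Then there is a constant C > 0 such that for all h ∈ (0,1] and ζ ∈ ℝⁿ, ρ_{ℏ,∞}^{-m} ρ_{ℏ,ff}^{-l} ρ_{ℏ,0}^{-k} ≤ C ρ_∞^{-m} h^{-k}, where ρ_{ℏ,∞} = (1+h²|ζ|²)^{-1/2}, ρ_{ℏ,ff} = (h² + (1+|ζ|²)^{-1})^{1/2}, ρ_{ℏ,0} = h/(h²+(1+|ζ|²)^{-1})^{1/2}, and ρ_∞ = (1+|ζ|²)^{-1/2}. -/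
/-!
Write `Z = ‖ζ‖²`, `A = √(1 + h²Z)`, `B = √(h² + (1 + Z)⁻¹)` and `D = √(1 + Z)`, so that the left-hand
side is `A^m B^(k-l) h^(-k)`. The identity `(BD)² = 1 + h²Z + h²` makes `BD` comparable to `A` up to
the factor `√2`, hence `A^m ≤ √2^|m| B^m D^m`; since `B ≤ √2` and `m + k - l ≥ 0`, the leftover power
`B^(m+k-l)` is bounded by `√2^(m+k-l)`.
-/

open Real Set

lemma rpow_le_rpow_abs_mul_rpow_of_le_of_le_mul {a b c : ℝ} (m : ℝ) (ha : 0 < a) (hc : 1 ≤ c)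
    (hab : a ≤ b) (hba : b ≤ c * a) : a ^ m ≤ c ^ |m| * b ^ m := by
  have hc0 : 0 < c := by linarith
  rcases le_or_gt 0 m with hm | hm
  · rw [abs_of_nonneg hm]
    calc a ^ m ≤ b ^ m := rpow_le_rpow ha.le hab hm
      _ ≤ c ^ m * b ^ m := le_mul_of_one_le_left (rpow_nonneg (ha.le.trans hab) m) (one_le_rpow hc hm)
  · rw [abs_of_neg hm, rpow_neg hc0.le]
    have hcab : (c * a) ^ m ≤ b ^ m := rpow_le_rpow_of_nonpos (ha.trans_le hab) hba hm.le
    rw [mul_rpow hc0.le ha.le] at hcab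
    rwa [← div_eq_inv_mul, le_div_iff₀' (rpow_pos_of_pos hc0 m)]

lemma inv_rpow_neg_mul_rpow_neg_mul_div_rpow_neg {A B h : ℝ} (m l k : ℝ) (hA : 0 ≤ A) (hB : 0 < B)
    (hh : 0 ≤ h) : A⁻¹ ^ (-m) * B ^ (-l) * (h / B) ^ (-k) = A ^ m * B ^ (k - l) * h ^ (-k) := by
  rw [inv_rpow hA, rpow_neg hA, inv_inv, div_rpow hh hB.le, rpow_neg hB.le k, div_inv_eq_mul,
    sub_eq_neg_add, rpow_add hB]
  ring

lemma mul_rpow_le_of_comparable {A B D c : ℝ} {m l k : ℝ} (hA : 0 < A) (hB : 0 < B) (hD : 0 < D)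
    (hc : 1 ≤ c) (hABD : A ≤ B * D) (hBDA : B * D ≤ c * A) (hBc : B ≤ c) (hl : l ≤ m + k) :
    A ^ m * B ^ (k - l) ≤ c ^ |m| * c ^ (m + k - l) * D ^ m := by
  have hA_pow : A ^ m ≤ c ^ |m| * (B * D) ^ m :=
    rpow_le_rpow_abs_mul_rpow_of_le_of_le_mul m hA hc hABD hBDA
  have hB_pow : B ^ (m + k - l) ≤ c ^ (m + k - l) := rpow_le_rpow hB.le hBc (by linarith)
  calc A ^ m * B ^ (k - l) ≤ c ^ |m| * (B * D) ^ m * B ^ (k - l) := by gcongr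
    _ = c ^ |m| * B ^ (m + k - l) * D ^ m := by
      rw [mul_rpow hB.le hD.le, show m + k - l = m + (k - l) by ring, rpow_add hB]
      ring
    _ ≤ c ^ |m| * c ^ (m + k - l) * D ^ m := by gcongr

lemma sqrt_sq_add_inv_mul_sqrt (h : ℝ) {Z : ℝ} (hZ : 0 ≤ Z) :
    √(h ^ 2 + (1 + Z)⁻¹) * √(1 + Z) = √(1 + h ^ 2 * Z + h ^ 2) := by
  rw [← sqrt_mul (by positivity)]
  congr 1
  field_simp
  ring

lemma sqrt_one_add_sq_mul_le_sqrt_add_sq {h Z : ℝ} :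
    √(1 + h ^ 2 * Z) ≤ √(1 + h ^ 2 * Z + h ^ 2) :=
  sqrt_le_sqrt (by nlinarith [sq_nonneg h])

lemma sqrt_one_add_sq_mul_add_sq_le {h Z : ℝ} (hh : |h| ≤ 1) (hZ : 0 ≤ Z) :
    √(1 + h ^ 2 * Z + h ^ 2) ≤ √2 * √(1 + h ^ 2 * Z) := by
  rw [← sqrt_mul zero_le_two]
  have : h ^ 2 ≤ 1 := by nlinarith [abs_nonneg h, sq_abs h]
  exact sqrt_le_sqrt (by nlinarith [mul_nonneg (sq_nonneg h) hZ])

lemma sqrt_sq_add_inv_le_sqrt_two {h Z : ℝ} (hh : |h| ≤ 1) (hZ : 0 ≤ Z) :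
    √(h ^ 2 + (1 + Z)⁻¹) ≤ √2 := by
  have h_sq : h ^ 2 ≤ 1 := by nlinarith [abs_nonneg h, sq_abs h]
  have h_inv : (1 + Z)⁻¹ ≤ 1 := inv_le_one_of_one_le₀ (by linarith)
  exact sqrt_le_sqrt (by linarith)

/-- if `l ≤ m + k` then
`ρ_{ℏ,∞}^{-m} ρ_{ℏ,ff}^{-l} ρ_{ℏ,0}^{-k} ≤ C ρ_∞^{-m} h^{-k}` uniformly,
encoding the symbol class inclusion `S^{m,l,k} ⊂ S^{m,k}`. -/
theorem stmt2 (n : ℕ) (m l k : ℝ) (hl : l ≤ m + k) :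
    ∃ C : ℝ, 0 < C ∧ ∀ h ∈ Ioc (0:ℝ) 1, ∀ ζ : EuclideanSpace ℝ (Fin n),
      ((Real.sqrt (1 + h^2 * ‖ζ‖^2))⁻¹) ^ (-m) *
        (Real.sqrt (h^2 + (1 + ‖ζ‖^2)⁻¹)) ^ (-l) *
        (h / Real.sqrt (h^2 + (1 + ‖ζ‖^2)⁻¹)) ^ (-k)
      ≤ C * ((Real.sqrt (1 + ‖ζ‖^2))⁻¹) ^ (-m) * h ^ (-k) := by
  refine ⟨√2 ^ |m| * √2 ^ (m + k - l), by positivity, ?_⟩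
  rintro h ⟨hh0, hh1⟩ ζ
  have hZ : 0 ≤ ‖ζ‖ ^ 2 := sq_nonneg _
  have hh : |h| ≤ 1 := by rwa [abs_of_pos hh0]
  have hB : 0 < √(h ^ 2 + (1 + ‖ζ‖ ^ 2)⁻¹) := sqrt_pos.2 (by positivity)
  have hD : 0 < √(1 + ‖ζ‖ ^ 2) := sqrt_pos.2 (by positivity)
  have hABD := sqrt_sq_add_inv_mul_sqrt h hZ
  rw [inv_rpow_neg_mul_rpow_neg_mul_div_rpow_neg m l k (sqrt_nonneg _) hB hh0.le,
    inv_rpow hD.le, rpow_neg hD.le, inv_inv]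
  refine mul_le_mul_of_nonneg_right ?_ (by positivity)
  exact mul_rpow_le_of_comparable (sqrt_pos.2 (by positivity)) hB hD (one_le_sqrt.2 one_le_two)
    (hABD ▸ sqrt_one_add_sq_mul_le_sqrt_add_sq) (hABD ▸ sqrt_one_add_sq_mul_add_sq_le hh hZ)
    (sqrt_sq_add_inv_le_sqrt_two hh hZ) hl
end

section
/- Let m, l, k ∈ ℝ with l ≥ m + k. Then there is a constant C > 0 such that for all h ∈ (0,1] and ζ ∈ ℝⁿ, ρ_{ℏ,∞}^{-m} ρ_{ℏ,ff}^{-l} ρ_{ℏ,0}^{-k} ≤ C ρ_∞^{-(l-k)} h^{-k}, with ρ_{ℏ,∞}, ρ_{ℏ,ff}, ρ_{ℏ,0}, ρ_∞ as in the resolved semiclassical-classical phase space (ρ_{ℏ,∞} = (1+h²|ζ|²)^{-1/2}, ρ_{ℏ,ff} = (h²+(1+|ζ|²)^{-1})^{1/2}, ρ_{ℏ,0} = h/(h²+(1+|ζ|²)^{-1})^{1/2}, ρ_∞ = (1+|ζ|²)^{-1/2}). -/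
/-!
Write `A = ρ_{ℏ,∞}⁻¹`, `B = ρ_{ℏ,ff}` and `r = ρ_∞⁻¹`. Since `ρ_{ℏ,0} = h / B`, the factor
`h ^ (-k)` appears on both sides and the claim becomes `A ^ m * B ^ (k - l) ≤ C * r ^ (l - k)`.
The key identity is `r * B = √(1 + h² (1 + |ζ|²))`: for `h ≤ 1` this is at least `1` and lies
between `A` and `2 A`, so `A ^ m ≲ (r B) ^ m ≤ (r B) ^ (l - k)` because `m ≤ l - k`.
-/

open Real Set

namespace Real

lemma inv_rpow_neg {x : ℝ} (hx : 0 ≤ x) (y : ℝ) : x⁻¹ ^ (-y) = x ^ y := by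
  rw [inv_rpow hx, rpow_neg hx, inv_inv]

lemma rpow_le_rpow_abs_mul_rpow {x s c : ℝ} (m : ℝ) (hx : 0 < x) (hxs : x ≤ s)
    (hsc : s ≤ c * x) : x ^ m ≤ c ^ |m| * s ^ m := by
  have hc : 1 ≤ c := le_of_mul_le_mul_right (by linarith : 1 * x ≤ c * x) hx
  have hs : 0 < s := hx.trans_le hxs
  rcases le_or_gt 0 m with hm | hm
  · calc x ^ m ≤ s ^ m := rpow_le_rpow hx.le hxs hm
      _ ≤ c ^ |m| * s ^ m :=
        le_mul_of_one_le_left (by positivity) (one_le_rpow hc (abs_nonneg m))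
  · calc x ^ m ≤ (s / c) ^ m :=
          rpow_le_rpow_of_nonpos (by positivity)
            (div_le_of_le_mul₀ (by positivity) hx.le (by linarith)) hm.le
      _ = c ^ |m| * s ^ m := by
          rw [div_rpow hs.le (by positivity), abs_of_neg hm, rpow_neg (by positivity)]
          ring

lemma sqrt_mul_sqrt_sq_add_inv (h : ℝ) {u : ℝ} (hu : 0 < u) :
    √u * √(h ^ 2 + u⁻¹) = √(1 + h ^ 2 * u) := by
  rw [← sqrt_mul hu.le]
  congr 1
  field_simp
  ring

end Real

lemma rpow_mul_rpow_neg_le_of_comparable {A B r c m e : ℝ} (hA : 0 < A) (hB : 0 < B)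
    (hr : 0 < r) (hA_le : A ≤ r * B) (hle_A : r * B ≤ c * A) (hone : 1 ≤ r * B) (hme : m ≤ e) :
    A ^ m * B ^ (-e) ≤ c ^ |m| * r ^ e := by
  have hc : 0 ≤ c := nonneg_of_mul_nonneg_left (by nlinarith) hA
  calc A ^ m * B ^ (-e) ≤ c ^ |m| * (r * B) ^ m * B ^ (-e) := by
        gcongr
        exact rpow_le_rpow_abs_mul_rpow m hA hA_le hle_A
    _ ≤ c ^ |m| * (r * B) ^ e * B ^ (-e) := by
        gcongr
    _ = c ^ |m| * r ^ e := by
        rw [mul_rpow hr.le hB.le, rpow_neg hB.le]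
        field_simp

/-- if `l ≥ m + k` then
`ρ_{ℏ,∞}^{-m} ρ_{ℏ,ff}^{-l} ρ_{ℏ,0}^{-k} ≤ C ρ_∞^{-(l-k)} h^{-k}` uniformly,
encoding the symbol class inclusion `S^{m,l,k} ⊂ S^{m+(l-(m+k)),k}`. -/
theorem stmt3 (n : ℕ) (m l k : ℝ) (hl : m + k ≤ l) :
    ∃ C : ℝ, 0 < C ∧ ∀ h ∈ Ioc (0:ℝ) 1, ∀ ζ : EuclideanSpace ℝ (Fin n),
      ((Real.sqrt (1 + h^2 * ‖ζ‖^2))⁻¹) ^ (-m) *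
        (Real.sqrt (h^2 + (1 + ‖ζ‖^2)⁻¹)) ^ (-l) *
        (h / Real.sqrt (h^2 + (1 + ‖ζ‖^2)⁻¹)) ^ (-k)
      ≤ C * ((Real.sqrt (1 + ‖ζ‖^2))⁻¹) ^ (-(l - k)) * h ^ (-k) := by
  refine ⟨2 ^ |m|, by positivity, ?_⟩
  rintro h ⟨hh0, hh1⟩ ζ
  have hu : 0 < 1 + ‖ζ‖ ^ 2 := by positivity
  set A := √(1 + h ^ 2 * ‖ζ‖ ^ 2)
  set B := √(h ^ 2 + (1 + ‖ζ‖ ^ 2)⁻¹)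
  set r := √(1 + ‖ζ‖ ^ 2)
  have hA : 0 < A := sqrt_pos.2 (by positivity)
  have hB : 0 < B := sqrt_pos.2 (by positivity)
  have hr : 0 < r := sqrt_pos.2 hu
  have hrB : r * B = √(1 + h ^ 2 * (1 + ‖ζ‖ ^ 2)) := sqrt_mul_sqrt_sq_add_inv h hu
  have hh2 : h ^ 2 ≤ 1 := pow_le_one₀ hh0.le hh1
  have hA_le : A ≤ r * B := by
    rw [hrB]
    exact sqrt_le_sqrt (by nlinarith)
  have hle_A : r * B ≤ 2 * A := by
    rw [hrB, sqrt_le_left (by positivity), mul_pow, sq_sqrt (by positivity)]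
    nlinarith [sq_nonneg ‖ζ‖]
  have hone : 1 ≤ r * B := by
    rw [hrB, one_le_sqrt]
    nlinarith [sq_nonneg ‖ζ‖]
  calc A⁻¹ ^ (-m) * B ^ (-l) * (h / B) ^ (-k) = A ^ m * B ^ (-(l - k)) * h ^ (-k) := by
        rw [inv_rpow_neg hA.le, div_rpow hh0.le hB.le, show -(l - k) = -l - -k by ring,
          rpow_sub hB]
        ring
    _ ≤ 2 ^ |m| * r ^ (l - k) * h ^ (-k) := by
        gcongr ?_ * _
        exact rpow_mul_rpow_neg_le_of_comparable hA hB hr hA_le hle_A hone (by linarith)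
    _ = 2 ^ |m| * r⁻¹ ^ (-(l - k)) * h ^ (-k) := by rw [inv_rpow_neg hr.le]
end
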